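/- Let Z be the realization of model C started from •^ℤ with i.i.d. uniform updates, and let d_n = P(Z_{0,n} = •). Then d_n equals the probability that a lazy random walk started at 1, with i.i.d. increments distributed as ρ = ¼δ_{−1} + ½δ_0 + ¼δ_1, stays ≥ 1 at all times 0,1,…,n. Equivalently, d_n = P(T > 2n) for T the first hitting time of 2 by the simple symmetric random walk started at 0. -/

import Mathlib

open MeasureTheory ProbabilityTheory

/-!
Conventions: a configuration of model C is `z : ℤ → Bool` (`false` = ∘ empty,
`true` = • particle); an update is `u : ℤ → Bool` (`true` = ↑, `false` = →).
-/

/-- The local map `𝒞` of model C: the `i`-th coordinate of `𝒞(z,u)` is `•` iff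
`(z_{i-1}z_i, u_{i-1}u_i) ∈ {(•∘, →⋅), (∘•, ⋅↑), (••, ↑↑), (••, →⋅)}`. -/
def modelC (z u : ℤ → Bool) : ℤ → Bool := fun i =>
  match z (i - 1), z i with
  | true, false => !u (i - 1)
  | false, true => u i
  | true, true => !u (i - 1) || u i
  | false, false => false

open scoped ENNReal

/-!
Read backwards in time, model C maps intervals to intervals: `Z_{n+1}` has a particle in `[a, b]`
iff `Z_n` has one in `[a - ε, b - ε']`, where `ε, ε' ∈ {0, 1}` are given by the updates at
`(a - 1, n)` and `(b, n)`. For `a ≤ b` these are two distinct fair bits, independent of each other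
and of the updates before time `n`, so the length `b - a + 1` of the dual interval is a lazy walk
with step law `ρ`, and the interval is nonempty as long as this length is `≥ 1`. As `Z_0` is full,
`d_n` is the probability that the lazy walk started at `1` stays `≥ 1` up to time `n`.

For the simple random walk `S`, the pair of steps `2k, 2k + 1` has law `ρ` scaled by `2`, and as `S`
moves by `±1` it cannot pass `2` without hitting it; accordingly both survival probabilities solve
the same recursion, with `l ↦ 2 - 2l` matching the lazy walk to `S` at even times.
-/

/-- Model C moves a particle at `j` to `j + jump (u j)`: the update `↑` keeps it, `→` moves it
one site to the right. -/
def jump (x : Bool) : ℤ := if x then 0 else 1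

@[simp] lemma jump_true : jump true = 0 := rfl

@[simp] lemma jump_false : jump false = 1 := rfl

lemma jump_nonneg (x : Bool) : 0 ≤ jump x := by cases x <;> simp

lemma jump_le_one (x : Bool) : jump x ≤ 1 := by cases x <;> simp

lemma modelC_eq_true_iff (z u : ℤ → Bool) (i : ℤ) :
    modelC z u i = true ↔
      (z (i - 1) = true ∧ u (i - 1) = false) ∨ (z i = true ∧ u i = true) := by
  unfold modelC
  cases z (i - 1) <;> cases z i <;> cases u (i - 1) <;> cases u i <;> simp

lemma modelC_eq_true_iff_exists_jump (z u : ℤ → Bool) (i : ℤ) :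
    modelC z u i = true ↔ ∃ j, z j = true ∧ j + jump (u j) = i := by
  rw [modelC_eq_true_iff]
  constructor
  · rintro (⟨hz, hu⟩ | ⟨hz, hu⟩)
    · exact ⟨i - 1, hz, by simp [hu]⟩
    · exact ⟨i, hz, by simp [hu]⟩
  · rintro ⟨j, hz, rfl⟩
    cases hu : u j <;> simp [hz, hu]

lemma le_add_jump_iff (u : ℤ → Bool) (a j : ℤ) :
    a ≤ j + jump (u j) ↔ a - jump (u (a - 1)) ≤ j := by
  rcases lt_trichotomy j (a - 1) with h | rfl | h
  · have := jump_le_one (u j); have := jump_le_one (u (a - 1)); omega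
  · have := jump_le_one (u (a - 1)); omega
  · have := jump_nonneg (u j); have := jump_nonneg (u (a - 1)); omega

lemma add_jump_le_iff (u : ℤ → Bool) (b j : ℤ) :
    j + jump (u j) ≤ b ↔ j ≤ b - jump (u b) := by
  rcases lt_trichotomy j b with h | rfl | h
  · have := jump_le_one (u j); have := jump_le_one (u b); omega
  · omega
  · have := jump_nonneg (u j); have := jump_nonneg (u b); omega

def HasParticle (z : ℤ → Bool) (a b : ℤ) : Prop := ∃ j, a ≤ j ∧ j ≤ b ∧ z j = true

lemma HasParticle.le {z : ℤ → Bool} {a b : ℤ} (h : HasParticle z a b) : a ≤ b := by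
  obtain ⟨j, haj, hjb, -⟩ := h
  exact haj.trans hjb

lemma hasParticle_const_true_iff (a b : ℤ) : HasParticle (fun _ => true) a b ↔ a ≤ b :=
  ⟨HasParticle.le, fun h => ⟨a, le_rfl, h, rfl⟩⟩

lemma hasParticle_self_iff (z : ℤ → Bool) (a : ℤ) : HasParticle z a a ↔ z a = true :=
  ⟨fun ⟨_, h₁, h₂, hj⟩ => le_antisymm h₂ h₁ ▸ hj, fun h => ⟨a, le_rfl, le_rfl, h⟩⟩

lemma hasParticle_modelC_iff (z u : ℤ → Bool) (a b : ℤ) :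
    HasParticle (modelC z u) a b ↔
      HasParticle z (a - jump (u (a - 1))) (b - jump (u b)) := by
  simp only [HasParticle, modelC_eq_true_iff_exists_jump, ← le_add_jump_iff, ← add_jump_le_iff]
  constructor
  · rintro ⟨_, ha, hb, j, hj, rfl⟩
    exact ⟨j, ha, hb, hj⟩
  · rintro ⟨j, ha, hb, hj⟩
    exact ⟨_, ha, hb, j, hj, rfl⟩

/-- The probability that a walk started at `x`, with i.i.d. steps taking the value `v ∈ V` with
probability `w v`, stays in `A` at times `0, …, n`. -/
noncomputable def survivalProb (A : ℤ → Prop) [DecidablePred A] (V : Finset ℤ) (w : ℤ → ℝ≥0∞) :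
    ℕ → ℤ → ℝ≥0∞
  | 0, x => if A x then 1 else 0
  | n + 1, x => if A x then ∑ v ∈ V, w v * survivalProb A V w n (x + v) else 0

/-- The step weights of `ρ = ¼δ₋₁ + ½δ₀ + ¼δ₁` on `{-1, 0, 1}`. -/
noncomputable def lazyWeight (v : ℤ) : ℝ≥0∞ := if v = 0 then 2⁻¹ else 4⁻¹

noncomputable abbrev lazySurvival : ℕ → ℤ → ℝ≥0∞ := survivalProb (1 ≤ ·) {-1, 0, 1} lazyWeight

noncomputable abbrev ssrwAvoidTwo : ℕ → ℤ → ℝ≥0∞ := survivalProb (· ≠ 2) {-1, 1} fun _ => 2⁻¹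

lemma ENNReal.inv_two_mul_inv_two : (2⁻¹ : ℝ≥0∞) * 2⁻¹ = 4⁻¹ := by
  rw [← ENNReal.mul_inv (by simp) (by simp)]
  norm_num

lemma ENNReal.inv_four_add_inv_four : (4⁻¹ : ℝ≥0∞) + 4⁻¹ = 2⁻¹ := by
  rw [← ENNReal.inv_two_mul_inv_two, ← mul_add, ENNReal.inv_two_add_inv_two, mul_one]

lemma sum_lazyWeight : ∑ v ∈ ({-1, 0, 1} : Finset ℤ), lazyWeight v = 1 := by
  rw [Finset.sum_insert (by decide), Finset.sum_pair (by decide)]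
  simp only [lazyWeight, if_pos, if_neg, Int.reduceNeg, neg_eq_zero, one_ne_zero,
    not_false_eq_true]
  rw [add_comm (2⁻¹ : ℝ≥0∞), ← add_assoc, ENNReal.inv_four_add_inv_four, ENNReal.inv_two_add_inv_two]

lemma lazySurvival_succ (n : ℕ) (l : ℤ) :
    lazySurvival (n + 1) l =
      if 1 ≤ l then 4⁻¹ * lazySurvival n (l - 1) + 2⁻¹ * lazySurvival n l +
        4⁻¹ * lazySurvival n (l + 1) else 0 := by
  simp only [survivalProb]
  split_ifs
  · simp [lazyWeight, sub_eq_add_neg, add_assoc]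
  · rfl

lemma ssrwAvoidTwo_succ (n : ℕ) (x : ℤ) :
    ssrwAvoidTwo (n + 1) x =
      if x ≠ 2 then 2⁻¹ * ssrwAvoidTwo n (x - 1) + 2⁻¹ * ssrwAvoidTwo n (x + 1) else 0 := by
  simp only [survivalProb]
  split_ifs
  · simp [sub_eq_add_neg]
  · rfl

lemma lazySurvival_eq_ssrwAvoidTwo (n : ℕ) {l : ℤ} (hl : 0 ≤ l) :
    lazySurvival n l = ssrwAvoidTwo (2 * n) (2 - 2 * l) := by
  induction n generalizing l with
  | zero =>
    simp only [survivalProb, Nat.mul_zero]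
    congr 1
    exact propext (by omega)
  | succ n ih =>
    rw [lazySurvival_succ, show 2 * (n + 1) = 2 * n + 1 + 1 by ring, ssrwAvoidTwo_succ]
    rcases hl.eq_or_lt with rfl | hl
    · simp
    rw [if_pos (by omega), if_pos (by omega), ssrwAvoidTwo_succ, ssrwAvoidTwo_succ,
      if_pos (by omega), if_pos (by omega), ih (by omega : 0 ≤ l - 1), ih hl.le,
      ih (by omega : 0 ≤ l + 1)]
    rw [show 2 - 2 * l - 1 - 1 = 2 - 2 * (l + 1) by ring, show 2 - 2 * l - 1 + 1 = 2 - 2 * l by ring,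
      show 2 - 2 * l + 1 - 1 = 2 - 2 * l by ring, show 2 - 2 * l + 1 + 1 = 2 - 2 * (l - 1) by ring]
    simp only [mul_add, ← mul_assoc, ENNReal.inv_two_mul_inv_two]
    rw [← ENNReal.inv_four_add_inv_four]
    ring

section Probability

variable {Ω ι : Type*} {β : ι → Type*} [mβ : ∀ i, MeasurableSpace (β i)] {f : ∀ i, Ω → β i}

lemma measurable_iSup_comap {S : Set ι} {i : ι} (hi : i ∈ S) :
    Measurable[⨆ j ∈ S, (mβ j).comap (f j)] (f i) :=
  Measurable.of_comap_le (le_iSup₂ (f := fun j (_ : j ∈ S) => (mβ j).comap (f j)) i hi)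

variable [MeasurableSpace Ω] {μ : Measure Ω}

lemma ProbabilityTheory.iIndepFun.measure_inter_eq_mul_of_disjoint (hf : iIndepFun f μ)
    (hmeas : ∀ i, Measurable (f i)) {S T : Set ι} (hST : Disjoint S T) {s t : Set Ω}
    (hs : MeasurableSet[⨆ i ∈ S, (mβ i).comap (f i)] s)
    (ht : MeasurableSet[⨆ i ∈ T, (mβ i).comap (f i)] t) :
    μ (s ∩ t) = μ s * μ t :=
  (Indep_iff _ _ μ).1 (indep_iSup_of_disjoint (fun i => (hmeas i).comap_le) hf.iIndep hST)
    s t hs ht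

lemma measure_eq_sum_preimage_singleton_inter {γ : Type*} [MeasurableSpace γ]
    [MeasurableSingletonClass γ] {g : Ω → γ} (hg : Measurable g) {V : Finset γ}
    (hV : μ (g ⁻¹' ↑V)ᶜ = 0) (E : Set Ω) :
    μ E = ∑ v ∈ V, μ (g ⁻¹' {v} ∩ E) := by
  rw [← measure_inter_conull (s := E) hV, Set.inter_comm,
    ← Measure.restrict_apply (hg V.measurableSet),
    ← sum_measure_preimage_singleton V fun v _ => hg (measurableSet_singleton v)]
  exact Finset.sum_congr rfl fun v _ => Measure.restrict_apply (hg (measurableSet_singleton v))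

lemma measure_preimage_eq_inv_two_of_bool [IsProbabilityMeasure μ] {g : Ω → Bool}
    (hg : Measurable g) (htrue : μ (g ⁻¹' {true}) = 2⁻¹) (x : Bool) : μ (g ⁻¹' {x}) = 2⁻¹ := by
  cases x
  · have hcompl : g ⁻¹' {false} = (g ⁻¹' {true})ᶜ := by ext; simp
    rw [hcompl, prob_compl_eq_one_sub (hg (measurableSet_singleton true)), htrue,
      ENNReal.one_sub_inv_two]
  · exact htrue

end Probability

section ModelC

variable {Ω : Type*} {U : ℤ × ℕ → Ω → Bool} {Z : ℕ → Ω → ℤ → Bool}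

abbrev updatesBefore (U : ℤ × ℕ → Ω → Bool) (n : ℕ) : MeasurableSpace Ω :=
  ⨆ p ∈ {p : ℤ × ℕ | p.2 < n}, MeasurableSpace.comap (U p) inferInstance

lemma measurableSet_modelC_eq_true (hZ0 : ∀ ω, Z 0 ω = fun _ => true)
    (hZ : ∀ n ω, Z (n + 1) ω = modelC (Z n ω) (fun i => U (i, n) ω)) (n : ℕ) (i : ℤ) :
    MeasurableSet[updatesBefore U n] {ω | Z n ω i = true} := by
  induction n generalizing i with
  | zero => simp only [hZ0, Set.ofPred_true, MeasurableSet.univ]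
  | succ n ih =>
    have hmono : updatesBefore U n ≤ updatesBefore U (n + 1) :=
      biSup_mono fun p (hp : p.2 < n) => Nat.lt_succ_of_lt hp
    have hU : ∀ j x, MeasurableSet[updatesBefore U (n + 1)] {ω | U (j, n) ω = x} := fun j x =>
      measurable_iSup_comap (f := U) (show n < n + 1 from Nat.lt_succ_self n)
        (measurableSet_singleton x)
    simp only [hZ, modelC_eq_true_iff, Set.ofPred_or, Set.ofPred_and]
    exact ((hmono _ (ih _)).inter (hU _ _)).union ((hmono _ (ih _)).inter (hU _ _))

lemma measurableSet_hasParticle (hZ0 : ∀ ω, Z 0 ω = fun _ => true)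
    (hZ : ∀ n ω, Z (n + 1) ω = modelC (Z n ω) (fun i => U (i, n) ω)) (n : ℕ) (a b : ℤ) :
    MeasurableSet[updatesBefore U n] {ω | HasParticle (Z n ω) a b} := by
  simp only [HasParticle, Set.ofPred_exists, Set.ofPred_and]
  exact MeasurableSet.iUnion fun j => (MeasurableSet.const _).inter
    ((MeasurableSet.const _).inter (measurableSet_modelC_eq_true hZ0 hZ n j))

variable [MeasurableSpace Ω] {P : Measure Ω} [IsProbabilityMeasure P]

lemma measure_updates_inter_hasParticle_succ (hUmeas : ∀ p, Measurable (U p))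
    (hUindep : iIndepFun U P) (hUunif : ∀ p, P (U p ⁻¹' {true}) = 2⁻¹)
    (hZ0 : ∀ ω, Z 0 ω = fun _ => true)
    (hZ : ∀ n ω, Z (n + 1) ω = modelC (Z n ω) (fun i => U (i, n) ω))
    {n : ℕ} {a b : ℤ} (hab : a ≤ b) (x y : Bool) :
    P ((fun ω => (U (a - 1, n) ω, U (b, n) ω)) ⁻¹' {(x, y)} ∩
        {ω | HasParticle (Z (n + 1) ω) a b}) =
      4⁻¹ * P {ω | HasParticle (Z n ω) (a - jump x) (b - jump y)} := by
  have hslice : (fun ω => (U (a - 1, n) ω, U (b, n) ω)) ⁻¹' {(x, y)} ∩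
      {ω | HasParticle (Z (n + 1) ω) a b} =
      (U (a - 1, n) ⁻¹' {x} ∩ U (b, n) ⁻¹' {y}) ∩
        {ω | HasParticle (Z n ω) (a - jump x) (b - jump y)} := by
    ext ω
    simp only [Set.mem_inter_iff, Set.mem_preimage, Set.mem_singleton_iff, Prod.mk.injEq,
      Set.mem_ofPred_eq, hZ, hasParticle_modelC_iff]
    constructor
    · rintro ⟨⟨rfl, rfl⟩, h⟩; exact ⟨⟨rfl, rfl⟩, h⟩
    · rintro ⟨⟨rfl, rfl⟩, h⟩; exact ⟨⟨rfl, rfl⟩, h⟩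
  have hne : (a - 1, n) ≠ (b, n) := fun h => by simp at h; omega
  have hupdates : P (U (a - 1, n) ⁻¹' {x} ∩ U (b, n) ⁻¹' {y}) = 4⁻¹ := by
    refine ((hUindep.indepFun hne).measure_inter_preimage_eq_mul {x} {y}
      (measurableSet_singleton x) (measurableSet_singleton y)).trans ?_
    rw [measure_preimage_eq_inv_two_of_bool (hUmeas _) (hUunif _),
      measure_preimage_eq_inv_two_of_bool (hUmeas _) (hUunif _), ENNReal.inv_two_mul_inv_two]
  have hdisj : Disjoint ({(a - 1, n), (b, n)} : Set (ℤ × ℕ)) {p | p.2 < n} := by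
    simp [Set.disjoint_left]
  rw [hslice, hUindep.measure_inter_eq_mul_of_disjoint hUmeas hdisj
    ((measurable_iSup_comap (f := U) (by simp) (measurableSet_singleton x)).inter
      (measurable_iSup_comap (f := U) (by simp) (measurableSet_singleton y)))
    (measurableSet_hasParticle hZ0 hZ n _ _), hupdates]

lemma measure_hasParticle (hUmeas : ∀ p, Measurable (U p))
    (hUindep : iIndepFun U P) (hUunif : ∀ p, P (U p ⁻¹' {true}) = 2⁻¹)
    (hZ0 : ∀ ω, Z 0 ω = fun _ => true)
    (hZ : ∀ n ω, Z (n + 1) ω = modelC (Z n ω) (fun i => U (i, n) ω)) (n : ℕ) (a b : ℤ) :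
    P {ω | HasParticle (Z n ω) a b} = lazySurvival n (b - a + 1) := by
  induction n generalizing a b with
  | zero =>
    simp only [hZ0, hasParticle_const_true_iff, survivalProb]
    by_cases hab : a ≤ b
    · simp [hab, show 1 ≤ b - a + 1 by omega]
    · simp [hab, show ¬1 ≤ b - a + 1 by omega]
  | succ n ih =>
    by_cases hab : a ≤ b
    · have hupdates : Measurable fun ω => (U (a - 1, n) ω, U (b, n) ω) :=
        (hUmeas _).prodMk (hUmeas _)
      rw [measure_eq_sum_preimage_singleton_inter hupdates (V := Finset.univ) (by simp),
        lazySurvival_succ, if_pos (by omega)]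
      simp only [measure_updates_inter_hasParticle_succ hUmeas hUindep hUunif hZ0 hZ hab, ih,
        Fintype.sum_prod_type, Fintype.sum_bool, jump_true, jump_false, sub_zero]
      rw [← ENNReal.inv_four_add_inv_four]
      ring_nf
    · have hempty : {ω | HasParticle (Z (n + 1) ω) a b} = ∅ :=
        Set.eq_empty_of_forall_notMem fun ω h => hab h.le
      rw [hempty, measure_empty, lazySurvival_succ, if_neg (by omega)]

end ModelC

section RandomWalk

variable {Ω : Type*} {η : ℕ → Ω → ℤ}

lemma measurableSet_walk_stays (A : ℤ → Prop) (n s : ℕ) (x : ℤ) :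
    MeasurableSet[⨆ i ∈ Set.Ici s, MeasurableSpace.comap (η i) inferInstance]
      {ω | ∀ k ≤ n, A (x + ∑ i ∈ Finset.range k, η (s + i) ω)} := by
  simp only [Set.ofPred_forall]
  refine MeasurableSet.iInter fun k => MeasurableSet.iInter fun _ => ?_
  have hsum : Measurable[⨆ i ∈ Set.Ici s, MeasurableSpace.comap (η i) inferInstance]
      fun ω => x + ∑ i ∈ Finset.range k, η (s + i) ω :=
    (Finset.measurable_sum _ fun i _ =>
      measurable_iSup_comap (f := η) (Set.mem_Ici.2 (Nat.le_add_right s i))).const_add x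
  exact hsum (MeasurableSet.of_discrete (s := {y | A y}))

lemma walk_stays_succ_iff (A : ℤ → Prop) (n s : ℕ) (x : ℤ) (ω : Ω) :
    (∀ k ≤ n + 1, A (x + ∑ i ∈ Finset.range k, η (s + i) ω)) ↔
      A x ∧ ∀ k ≤ n, A (x + η s ω + ∑ i ∈ Finset.range k, η (s + 1 + i) ω) := by
  simp only [← Nat.lt_succ_iff, Nat.forall_lt_succ_left, Finset.range_zero, Finset.sum_empty,
    add_zero, Finset.sum_range_succ', add_assoc, add_comm 1, add_comm (η s ω)]

variable [MeasurableSpace Ω] {P : Measure Ω} [IsProbabilityMeasure P]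

lemma measure_walk_stays (hmeas : ∀ k, Measurable (η k)) (hindep : iIndepFun η P)
    {V : Finset ℤ} {w : ℤ → ℝ≥0∞} (hw : ∑ v ∈ V, w v = 1)
    (hlaw : ∀ k, ∀ v ∈ V, P (η k ⁻¹' {v}) = w v) (A : ℤ → Prop) [DecidablePred A]
    (n s : ℕ) (x : ℤ) :
    P {ω | ∀ k ≤ n, A (x + ∑ i ∈ Finset.range k, η (s + i) ω)} = survivalProb A V w n x := by
  induction n generalizing s x with
  | zero => by_cases hx : A x <;> simp [survivalProb, hx]
  | succ n ih =>
    simp only [walk_stays_succ_iff, survivalProb]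
    by_cases hx : A x
    swap
    · simp [hx]
    have hV : P (η s ⁻¹' ↑V)ᶜ = 0 := by
      rw [prob_compl_eq_zero_iff ((hmeas s) V.measurableSet),
        ← sum_measure_preimage_singleton V fun v _ => hmeas s (measurableSet_singleton v),
        Finset.sum_congr rfl (hlaw s), hw]
    have hdisj : Disjoint ({s} : Set ℕ) (Set.Ici (s + 1)) := by simp
    rw [measure_eq_sum_preimage_singleton_inter (hmeas s) hV, if_pos hx]
    refine Finset.sum_congr rfl fun v hv => ?_
    have hslice : η s ⁻¹' {v} ∩ {ω | A x ∧ ∀ k ≤ n,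
          A (x + η s ω + ∑ i ∈ Finset.range k, η (s + 1 + i) ω)} =
        η s ⁻¹' {v} ∩ {ω | ∀ k ≤ n, A (x + v + ∑ i ∈ Finset.range k, η (s + 1 + i) ω)} := by
      ext ω
      simp only [Set.mem_inter_iff, Set.mem_preimage, Set.mem_singleton_iff, Set.mem_ofPred_eq]
      constructor
      · rintro ⟨rfl, -, h⟩; exact ⟨rfl, h⟩
      · rintro ⟨rfl, h⟩; exact ⟨rfl, hx, h⟩
    have hstep : MeasurableSet[⨆ i ∈ ({s} : Set ℕ), MeasurableSpace.comap (η i) inferInstance]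
        (η s ⁻¹' {v}) :=
      measurable_iSup_comap (f := η) (Set.mem_singleton s) (measurableSet_singleton v)
    rw [hslice, hindep.measure_inter_eq_mul_of_disjoint hmeas hdisj hstep
      (measurableSet_walk_stays A n (s + 1) (x + v)), hlaw s v hv, ih]

end RandomWalk

lemma ENat.natCast_lt_iInf_iff (p : ℕ → Prop) (m : ℕ) :
    (m : ℕ∞) < ⨅ (k : ℕ) (_ : p k), (k : ℕ∞) ↔ ∀ k ≤ m, ¬p k := by
  rw [← ENat.add_one_le_iff (ENat.natCast_ne_top m), le_iInf₂_iff]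
  refine ⟨fun h k hk hpk => ?_, fun h k hpk => ?_⟩
  · have := h k hpk
    norm_cast at this
    omega
  · have : ¬k ≤ m := fun hk => h k hk hpk
    norm_cast
    omega

/-- for the realization `Z` of model C started from `•^ℤ` with i.i.d.
uniform updates, the density `d_n = P(Z_{0,n} = •)` equals the probability that a lazy
random walk `W` started at `1`, with i.i.d. increments of law
`ρ = ¼δ_{-1} + ½δ_0 + ¼δ_1`, stays `≥ 1` at all times `0, 1, …, n`; equivalently,
`d_n = P(T > 2n)` for `T` the first hitting time of `2` by the simple symmetric random
walk started at `0`. -/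
theorem modelC_density_eq_walk
    -- the model C realization
    {Ω : Type*} [MeasurableSpace Ω] (P : Measure Ω) [IsProbabilityMeasure P]
    (U : ℤ × ℕ → Ω → Bool) (hUmeas : ∀ p, Measurable (U p))
    (hUindep : iIndepFun U P)
    (hUunif : ∀ p, P {ω | U p ω = true} = 1 / 2)
    (Z : ℕ → Ω → ℤ → Bool)
    (hZ0 : ∀ ω, Z 0 ω = fun _ => true)
    (hZ : ∀ n ω, Z (n + 1) ω = modelC (Z n ω) (fun i => U (i, n) ω))
    -- the lazy random walk with step distribution ρ, started at 1
    {Ω' : Type*} [MeasurableSpace Ω'] (P' : Measure Ω') [IsProbabilityMeasure P']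
    (η : ℕ → Ω' → ℤ) (hηmeas : ∀ k, Measurable (η k))
    (hηindep : iIndepFun η P')
    (hηm1 : ∀ k, P' {ω | η k ω = -1} = 1 / 4)
    (hη0 : ∀ k, P' {ω | η k ω = 0} = 1 / 2)
    (hη1 : ∀ k, P' {ω | η k ω = 1} = 1 / 4)
    (W : ℕ → Ω' → ℤ) (hW : ∀ k ω, W k ω = 1 + ∑ i ∈ Finset.range k, η i ω)
    -- the simple symmetric random walk started at 0 and its hitting time of 2
    {Ω'' : Type*} [MeasurableSpace Ω''] (P'' : Measure Ω'') [IsProbabilityMeasure P'']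
    (ξ : ℕ → Ω'' → ℤ) (hξmeas : ∀ k, Measurable (ξ k))
    (hξindep : iIndepFun ξ P'')
    (hξ1 : ∀ k, P'' {ω | ξ k ω = 1} = 1 / 2)
    (hξm1 : ∀ k, P'' {ω | ξ k ω = -1} = 1 / 2)
    (S : ℕ → Ω'' → ℤ) (hS : ∀ k ω, S k ω = ∑ i ∈ Finset.range k, ξ i ω)
    (T : Ω'' → ℕ∞) (hT : ∀ ω, T ω = ⨅ (k : ℕ) (_ : S k ω = 2), (k : ℕ∞))
    (n : ℕ) :
    P {ω | Z n ω 0 = true} = P' {ω | ∀ k ≤ n, 1 ≤ W k ω} ∧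
    P {ω | Z n ω 0 = true} = P'' {ω | ((2 * n : ℕ) : ℕ∞) < T ω} := by
  have hmodel : P {ω | Z n ω 0 = true} = lazySurvival n 1 := by
    simpa [hasParticle_self_iff] using measure_hasParticle hUmeas hUindep
      (fun p => (hUunif p).trans (one_div 2)) hZ0 hZ n 0 0
  have hlazy : P' {ω | ∀ k ≤ n, 1 ≤ W k ω} = lazySurvival n 1 := by
    have hlaw : ∀ k, ∀ v ∈ ({-1, 0, 1} : Finset ℤ), P' (η k ⁻¹' {v}) = lazyWeight v := by
      intro k v hv
      simp only [Finset.mem_insert, Finset.mem_singleton] at hv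
      rcases hv with rfl | rfl | rfl
      · exact (hηm1 k).trans (by simp [lazyWeight])
      · exact (hη0 k).trans (by simp [lazyWeight])
      · exact (hη1 k).trans (by simp [lazyWeight])
    simpa [hW] using measure_walk_stays hηmeas hηindep sum_lazyWeight hlaw (1 ≤ ·) n 0 1
  have hssrw : P'' {ω | ((2 * n : ℕ) : ℕ∞) < T ω} = lazySurvival n 1 := by
    have hlaw : ∀ k, ∀ v ∈ ({-1, 1} : Finset ℤ), P'' (ξ k ⁻¹' {v}) = 2⁻¹ := by
      intro k v hv
      simp only [Finset.mem_insert, Finset.mem_singleton] at hv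
      rcases hv with rfl | rfl
      · exact (hξm1 k).trans (one_div 2)
      · exact (hξ1 k).trans (one_div 2)
    rw [lazySurvival_eq_ssrwAvoidTwo n zero_le_one, mul_one, sub_self]
    refine Eq.trans ?_ (measure_walk_stays hξmeas hξindep
      (by rw [Finset.sum_pair (by norm_num), ENNReal.inv_two_add_inv_two]) hlaw (· ≠ 2) (2 * n) 0 0)
    congr 1
    ext ω
    simp only [Set.mem_ofPred_eq, hT, hS, ENat.natCast_lt_iInf_iff, zero_add]
  exact ⟨hmodel.trans hlazy.symm, hmodel.trans hssrw.symm⟩
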